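/- arXiv:2410.17205 — 2 statements merged into one kernel-verified Lean document; each statement's English description precedes it below -/
import Mathlib

section
/- Let ϰ : ℝ → ℝ be given by ϰ(r) = r·log r − r + 1 for r > 0. Let B ≥ 0 and let n be a positive integer with √n ≥ 2B. Then for every real w with |w| ≤ B, one has |n·ϰ(1 − w/√n) − w²/2| ≤ (2/3)·B³/√n. In particular, for a fixed bounded function w, n·ϰ(1 − w/√n) converges to w²/2 uniformly as n → ∞. -/
/-!
Put `x = w / √n`, so that `|x| ≤ 1/2` and `n x² = w²`. Then `n ϰ(1 - x) - w²/2 = n g(x)` with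
`g(x) = (1 - x) log (1 - x) + x - x²/2 = ∑_{k ≥ 3} x^k / (k (k - 1))`, which vanishes to third order
at `0`. Truncating the logarithmic series after five terms gives `|g(x)| ≤ (2/3) |x|³` for
`|x| ≤ 1/2`, and `n |x|³ = |w|³ / √n`.
-/

open Real

lemma abs_log_one_sub_add_taylor_five_le {x : ℝ} (hx : |x| ≤ 1 / 2) :
    |log (1 - x) + (x + x ^ 2 / 2 + x ^ 3 / 3 + x ^ 4 / 4 + x ^ 5 / 5)| ≤ 2 * |x| ^ 6 := by
  have h := abs_log_sub_add_sum_range_le (hx.trans_lt (by norm_num)) 5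
  simp only [Finset.sum_range_succ, Finset.sum_range_zero] at h
  norm_num at h
  calc _ ≤ |x| ^ 6 / (1 - |x|) := by convert h using 2; ring
    _ ≤ 2 * |x| ^ 6 := by
      rw [div_le_iff₀ (by linarith)]
      nlinarith [pow_nonneg (abs_nonneg x) 6]

lemma abs_one_sub_mul_log_one_sub_add_sub_sq_le {x : ℝ} (hx : |x| ≤ 1 / 2) :
    |(1 - x) * log (1 - x) + x - x ^ 2 / 2| ≤ 2 / 3 * |x| ^ 3 := by
  set E := log (1 - x) + (x + x ^ 2 / 2 + x ^ 3 / 3 + x ^ 4 / 4 + x ^ 5 / 5)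
  have hE : |E| ≤ 2 * |x| ^ 6 := abs_log_one_sub_add_taylor_five_le hx
  have hsplit : (1 - x) * log (1 - x) + x - x ^ 2 / 2
      = x ^ 3 * (1 / 6 + x / 12 + x ^ 2 / 20 + x ^ 3 / 5) + (1 - x) * E := by
    simp only [E]; ring
  obtain ⟨hx₁, hx₂⟩ := abs_le.mp hx
  have hq : |1 / 6 + x / 12 + x ^ 2 / 20 + x ^ 3 / 5| ≤ 59 / 240 := by
    rw [abs_le]; constructor <;> nlinarith
  have h1x : |1 - x| ≤ 3 / 2 := by rw [abs_le]; constructor <;> linarith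
  have hx3 : |x| ^ 3 ≤ 1 / 8 := by
    calc |x| ^ 3 ≤ (1 / 2) ^ 3 := by gcongr
      _ = 1 / 8 := by norm_num
  calc _ = |x ^ 3 * (1 / 6 + x / 12 + x ^ 2 / 20 + x ^ 3 / 5) + (1 - x) * E| := by rw [hsplit]
    _ ≤ |x| ^ 3 * (59 / 240) + 3 / 2 * (2 * (|x| ^ 3 * |x| ^ 3)) := by
      refine (abs_add_le _ _).trans (add_le_add ?_ ?_)
      · rw [abs_mul, abs_pow]; gcongr
      · rw [abs_mul, ← pow_add]; gcongr
    _ ≤ 2 / 3 * |x| ^ 3 := by nlinarith [pow_nonneg (abs_nonneg x) 3]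

lemma abs_div_le_half {w s : ℝ} (hs : 0 ≤ s) (hw : 2 * |w| ≤ s) : |w / s| ≤ 1 / 2 := by
  rw [abs_div, abs_of_nonneg hs]
  exact div_le_of_le_mul₀ hs (by norm_num) (by linarith)

lemma abs_sq_mul_entropy_one_sub_div_sub_le {w s : ℝ} (hs : 0 ≤ s) (hw : 2 * |w| ≤ s) :
    |s ^ 2 * ((1 - w / s) * log (1 - w / s) - (1 - w / s) + 1) - w ^ 2 / 2|
      ≤ 2 / 3 * |w| ^ 3 / s := by
  rcases hs.eq_or_lt with rfl | hs
  · obtain rfl : w = 0 := abs_nonpos_iff.mp (by linarith)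
    simp
  have hrescale : s ^ 2 * ((1 - w / s) * log (1 - w / s) - (1 - w / s) + 1) - w ^ 2 / 2
      = s ^ 2 * ((1 - w / s) * log (1 - w / s) + w / s - (w / s) ^ 2 / 2) := by
    field_simp; ring
  calc _ = s ^ 2 * |(1 - w / s) * log (1 - w / s) + w / s - (w / s) ^ 2 / 2| := by
        rw [hrescale, abs_mul, abs_of_nonneg (by positivity)]
    _ ≤ s ^ 2 * (2 / 3 * |w / s| ^ 3) := by
        gcongr
        exact abs_one_sub_mul_log_one_sub_add_sub_sq_le (abs_div_le_half hs.le hw)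
    _ = 2 / 3 * |w| ^ 3 / s := by
        rw [abs_div, abs_of_pos hs]; field_simp

theorem varkappa_scaled_quadratic_approx_general
    (ϰ : ℝ → ℝ) (hϰ : ∀ r : ℝ, 0 < r → ϰ r = r * Real.log r - r + 1)
    (B : ℝ) (n : ℕ) (hsqrt : 2 * B ≤ Real.sqrt n) :
    ∀ w : ℝ, |w| ≤ B →
      |(n : ℝ) * ϰ (1 - w / Real.sqrt n) - w ^ 2 / 2| ≤ 2 / 3 * B ^ 3 / Real.sqrt n := by
  intro w hw
  have hs : 0 ≤ √(n : ℝ) := sqrt_nonneg _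
  have hw' : 2 * |w| ≤ √(n : ℝ) := by linarith
  have hpos : 0 < 1 - w / √(n : ℝ) := by
    linarith [(abs_le.mp (abs_div_le_half hs hw')).2]
  have hbound := abs_sq_mul_entropy_one_sub_div_sub_le hs hw'
  rw [sq_sqrt (Nat.cast_nonneg n)] at hbound
  rw [hϰ _ hpos]
  calc _ ≤ 2 / 3 * |w| ^ 3 / √(n : ℝ) := hbound
    _ ≤ 2 / 3 * B ^ 3 / √(n : ℝ) := by gcongr

/-- For `ϰ(r) = r log r - r + 1` (for `r > 0`), `B ≥ 0` and a positive integer `n`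
with `√n ≥ 2B`: for every real `w` with `|w| ≤ B`,
`|n ϰ(1 - w/√n) - w²/2| ≤ (2/3) B³ / √n`. -/
theorem varkappa_scaled_quadratic_approx
    (ϰ : ℝ → ℝ) (hϰ : ∀ r : ℝ, 0 < r → ϰ r = r * Real.log r - r + 1)
    (B : ℝ) (hB : 0 ≤ B) (n : ℕ) (hn : 0 < n) (hsqrt : 2 * B ≤ Real.sqrt n) :
    ∀ w : ℝ, |w| ≤ B →
      |(n : ℝ) * ϰ (1 - w / Real.sqrt n) - w ^ 2 / 2| ≤ 2 / 3 * B ^ 3 / Real.sqrt n :=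
  varkappa_scaled_quadratic_approx_general ϰ hϰ B n hsqrt
end

section
/- Let M > 0 and let (wⁿ)_{n∈ℕ} be a sequence of measurable functions wⁿ : [0,∞) → ℝ^d such that sup_{T>0} (1/T)·∫₀ᵀ ‖wⁿ(t)‖² dt ≤ M for every n. Then there exist a measurable function w : [0,∞) → ℝ^d with sup_{T>0} (1/T)·∫₀ᵀ ‖w(t)‖² dt ≤ M and a strictly increasing sequence (n_k) of indices such that for every T > 0 and every measurable g : [0,∞) → ℝ^d with ∫₀ᵀ ‖g(t)‖² dt < ∞, one has ∫₀ᵀ ⟨w^{n_k}(t), g(t)⟩ dt → ∫₀ᵀ ⟨w(t), g(t)⟩ dt as k → ∞. -/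
open MeasureTheory Filter Set Topology Real
open scoped ENNReal InnerProductSpace

/-!
A time-average bound `∫₀ᵀ ‖w‖² ≤ M T` for all `T` makes `w` bounded in the weighted space
`L²((0,∞), e^{-t} dt)`, summing over the unit intervals `(n, n+1]`. That space is a separable
Hilbert space, so a subsequence converges weakly there. Weighted weak convergence gives weak
convergence in `L²(0,T)` by testing against `1_{(0,T]} e^{t} g`, and the bound for the limit
follows from weak lower semicontinuity of the norm in `L²(0,T)`.
-/

section HilbertSpace

variable {𝕜 H : Type*} [RCLike 𝕜] [NormedAddCommGroup H] [InnerProductSpace 𝕜 H]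

theorem exists_subseq_tendsto_inner [CompleteSpace H] [TopologicalSpace.SeparableSpace H]
    {x : ℕ → H} {R : ℝ} (hx : ∀ n, ‖x n‖ ≤ R) :
    ∃ y : H, ∃ φ : ℕ → ℕ, StrictMono φ ∧
      ∀ g, Tendsto (fun k => ⟪x (φ k), g⟫_𝕜) atTop (𝓝 ⟪y, g⟫_𝕜) := by
  set x' : ℕ → WeakDual 𝕜 H :=
    fun n => StrongDual.toWeakDual (InnerProductSpace.toDual 𝕜 H (x n))
  have hball : ∀ n, x' n ∈ WeakDual.toStrongDual ⁻¹' Metric.closedBall 0 R := fun n => by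
    simpa [x'] using hx n
  obtain ⟨ψ, -, φ, hφ, hψ⟩ := WeakDual.isSeqCompact_closedBall 𝕜 H 0 R hball
  refine ⟨(InnerProductSpace.toDual 𝕜 H).symm (WeakDual.toStrongDual ψ), φ, hφ, fun g => ?_⟩
  rw [InnerProductSpace.toDual_symm_apply]
  exact ((WeakDual.eval_continuous g).tendsto ψ).comp hψ

theorem norm_le_of_tendsto_inner {x : ℕ → H} {R : ℝ} (hx : ∀ n, ‖x n‖ ≤ R) {y : H}
    (h : Tendsto (fun n => ⟪x n, y⟫_𝕜) atTop (𝓝 ⟪y, y⟫_𝕜)) : ‖y‖ ≤ R := by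
  have hR : 0 ≤ R := (norm_nonneg _).trans (hx 0)
  have hinner : ‖⟪y, y⟫_𝕜‖ ≤ R * ‖y‖ := le_of_tendsto h.norm <| Eventually.of_forall fun n =>
    (norm_inner_le_norm _ _).trans (by gcongr; exact hx n)
  have hsq : ‖⟪y, y⟫_𝕜‖ = ‖y‖ ^ 2 := by simp [inner_self_eq_norm_sq_to_K]
  nlinarith [norm_nonneg y]

end HilbertSpace

namespace MeasureTheory

variable {α E : Type*} [MeasurableSpace α] {μ : Measure α} [NormedAddCommGroup E]

theorem memLp_two_iff_lintegral_ofReal_sq_lt_top {f : α → E}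
    (hf : AEStronglyMeasurable f μ) :
    MemLp f 2 μ ↔ ∫⁻ x, ENNReal.ofReal (‖f x‖ ^ 2) ∂μ < ∞ := by
  rw [memLp_two_iff_integrable_sq_norm hf, Integrable,
    hasFiniteIntegral_iff_ofReal (Eventually.of_forall fun x => sq_nonneg _)]
  exact and_iff_right (hf.norm.aemeasurable.pow_const 2).aestronglyMeasurable

theorem MemLp.ofReal_sq_norm_toLp {f : α → E} (hf : MemLp f 2 μ) :
    ENNReal.ofReal (‖hf.toLp f‖ ^ 2) = ∫⁻ x, ENNReal.ofReal (‖f x‖ ^ 2) ∂μ := by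
  have h := eLpNorm_nnreal_pow_eq_lintegral (f := f) (μ := μ) (p := 2) two_ne_zero
  simp only [NNReal.coe_ofNat, ENNReal.coe_ofNat, ENNReal.rpow_ofNat] at h
  rw [Lp.norm_toLp, ← ENNReal.toReal_pow,
    ENNReal.ofReal_toReal (ENNReal.pow_ne_top hf.eLpNorm_ne_top), h]
  simp_rw [ENNReal.ofReal_pow (norm_nonneg _), ofReal_norm]

theorem MemLp.norm_toLp_le_sqrt_iff {f : α → E} (hf : MemLp f 2 μ) (c : ℝ) :
    ‖hf.toLp f‖ ≤ √c ↔ ∫⁻ x, ENNReal.ofReal (‖f x‖ ^ 2) ∂μ ≤ ENNReal.ofReal c := by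
  rw [← hf.ofReal_sq_norm_toLp]
  rcases le_total 0 c with hc | hc
  · rw [Real.le_sqrt (norm_nonneg _) hc, ENNReal.ofReal_le_ofReal_iff hc]
  · rw [Real.sqrt_eq_zero'.2 hc, ENNReal.ofReal_eq_zero.2 hc, nonpos_iff_eq_zero (α := ℝ≥0∞),
      ENNReal.ofReal_eq_zero, sq_nonpos_iff, norm_le_zero_iff, norm_eq_zero]

variable {𝕜 : Type*} [RCLike 𝕜] [InnerProductSpace 𝕜 E]

theorem MemLp.inner_toLp_toLp {f g : α → E} (hf : MemLp f 2 μ) (hg : MemLp g 2 μ) :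
    ⟪hf.toLp f, hg.toLp g⟫_𝕜 = ∫ x, ⟪f x, g x⟫_𝕜 ∂μ := by
  rw [L2.inner_def]
  refine integral_congr_ae ?_
  filter_upwards [hf.coeFn_toLp, hg.coeFn_toLp] with x hfx hgx
  rw [hfx, hgx]

theorem lintegral_ofReal_sq_le_of_tendsto_integral_inner {f : ℕ → α → E} {g : α → E}
    (hf : ∀ k, AEStronglyMeasurable (f k) μ) {c : ℝ}
    (hfc : ∀ k, ∫⁻ x, ENNReal.ofReal (‖f k x‖ ^ 2) ∂μ ≤ ENNReal.ofReal c) (hg : MemLp g 2 μ)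
    (h : Tendsto (fun k => ∫ x, ⟪f k x, g x⟫_𝕜 ∂μ) atTop (𝓝 (∫ x, ⟪g x, g x⟫_𝕜 ∂μ))) :
    ∫⁻ x, ENNReal.ofReal (‖g x‖ ^ 2) ∂μ ≤ ENNReal.ofReal c := by
  have hmem : ∀ k, MemLp (f k) 2 μ := fun k =>
    (memLp_two_iff_lintegral_ofReal_sq_lt_top (hf k)).2 ((hfc k).trans_lt ENNReal.ofReal_lt_top)
  rw [← hg.norm_toLp_le_sqrt_iff]
  refine norm_le_of_tendsto_inner (𝕜 := 𝕜)
    (fun k => ((hmem k).norm_toLp_le_sqrt_iff c).2 (hfc k)) ?_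
  simpa only [MemLp.inner_toLp_toLp] using h

theorem Lp.exists_stronglyMeasurable_toLp_eq {p : ℝ≥0∞} (v : Lp E p μ) :
    ∃ f : α → E, StronglyMeasurable f ∧ ∃ hf : MemLp f p μ, hf.toLp f = v := by
  have hv := Lp.aestronglyMeasurable v
  have hmem : MemLp (hv.mk v) p μ := (Lp.memLp v).ae_eq hv.ae_eq_mk
  refine ⟨hv.mk v, hv.stronglyMeasurable_mk, hmem, ?_⟩
  rw [MemLp.toLp_congr hmem (Lp.memLp v) hv.ae_eq_mk.symm, Lp.toLp_coeFn]

end MeasureTheory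

theorem ENNReal.div_ofReal_le_ofReal_iff {a : ℝ≥0∞} {x y : ℝ} (hy : 0 < y) :
    a / ENNReal.ofReal y ≤ ENNReal.ofReal x ↔ a ≤ ENNReal.ofReal (x * y) := by
  rw [ENNReal.div_le_iff (ENNReal.ofReal_pos.2 hy).ne' ENNReal.ofReal_ne_top,
    ENNReal.ofReal_mul' hy.le]

noncomputable def expWeightedVolume : Measure ℝ :=
  (volume.restrict (Ioi 0)).withDensity fun t => ENNReal.ofReal (exp (-t))

namespace expWeightedVolume

instance : SFinite expWeightedVolume := by
  unfold expWeightedVolume; infer_instance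

theorem restrict_Ioc (T : ℝ) :
    expWeightedVolume.restrict (Ioc 0 T) =
      (volume.restrict (Ioc 0 T)).withDensity fun t => ENNReal.ofReal (exp (-t)) := by
  rw [expWeightedVolume, restrict_withDensity measurableSet_Ioc,
    Measure.restrict_restrict measurableSet_Ioc, inter_eq_left.2 Ioc_subset_Ioi_self]

theorem restrict_Ioc_le (T : ℝ) :
    expWeightedVolume.restrict (Ioc 0 T) ≤ volume.restrict (Ioc 0 T) := by
  rw [restrict_Ioc]
  conv_rhs => rw [← withDensity_one (μ := volume.restrict (Ioc 0 T))]
  refine withDensity_mono (ae_restrict_of_forall_mem measurableSet_Ioc fun t ht => ?_)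
  exact ENNReal.ofReal_le_one.2 (exp_le_one_iff.2 (neg_nonpos.2 ht.1.le))

theorem volume_restrict_Ioc_le (T : ℝ) :
    volume.restrict (Ioc 0 T) ≤ ENNReal.ofReal (exp T) • expWeightedVolume.restrict (Ioc 0 T) := by
  rw [restrict_Ioc, ← withDensity_smul' _ _ ENNReal.ofReal_ne_top]
  conv_lhs => rw [← withDensity_one (μ := volume.restrict (Ioc 0 T))]
  refine withDensity_mono (ae_restrict_of_forall_mem measurableSet_Ioc fun t ht => ?_)
  rw [Pi.one_apply, Pi.smul_apply, smul_eq_mul, ← ENNReal.ofReal_mul (exp_pos T).le, ← exp_add]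
  exact ENNReal.one_le_ofReal.2 (one_le_exp (by linarith [ht.2]))

theorem exists_lintegral_le (M : ℝ) :
    ∃ C : ℝ, ∀ f : ℝ → ℝ≥0∞, (∀ T, 0 < T → ∫⁻ t in Ioc 0 T, f t ≤ ENNReal.ofReal (M * T)) →
      ∫⁻ t, f t ∂expWeightedVolume ≤ ENNReal.ofReal C := by
  have hsum : Summable fun n : ℕ => ((n : ℝ) + 1) * exp (-n) := by
    refine ((summable_pow_mul_exp_neg_nat_mul 1 one_pos).add
      (summable_pow_mul_exp_neg_nat_mul 0 one_pos)).congr fun n => ?_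
    simp only [pow_one, pow_zero, neg_mul, one_mul]
    ring
  refine ⟨M * ∑' n : ℕ, ((n : ℝ) + 1) * exp (-n), fun f hf => ?_⟩
  have hcover : ⋃ n : ℕ, Ioc (n : ℝ) (n + 1) = Ioi 0 := by
    simpa using iUnion_Ioc_map_succ_eq_Ioi (f := ((↑) : ℕ → ℝ)) (fun n => by simp)
      fun ⟨b, hb⟩ => (exists_nat_gt b).elim fun n hn => (hb ⟨n, rfl⟩).not_gt hn
  have hpiece : ∀ n : ℕ, ∫⁻ t in Ioc (n : ℝ) (n + 1), ENNReal.ofReal (exp (-t)) * f t ≤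
      ENNReal.ofReal M * ENNReal.ofReal ((n + 1) * exp (-n)) := fun n => calc
    _ ≤ ∫⁻ t in Ioc (n : ℝ) (n + 1), ENNReal.ofReal (exp (-n)) * f t :=
      setLIntegral_mono' measurableSet_Ioc fun t ht => by
        gcongr; exact ht.1.le
    _ = ENNReal.ofReal (exp (-n)) * ∫⁻ t in Ioc (n : ℝ) (n + 1), f t :=
      lintegral_const_mul' _ _ ENNReal.ofReal_ne_top
    _ ≤ ENNReal.ofReal (exp (-n)) * ∫⁻ t in Ioc 0 ((n : ℝ) + 1), f t := by
      gcongr; exact n.cast_nonneg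
    _ ≤ ENNReal.ofReal (exp (-n)) * ENNReal.ofReal (M * (n + 1)) := by
      gcongr; exact hf _ (by positivity)
    _ = ENNReal.ofReal M * ENNReal.ofReal ((n + 1) * exp (-n)) := by
      rw [ENNReal.ofReal_mul' (by positivity), ENNReal.ofReal_mul (by positivity)]; ring
  calc ∫⁻ t, f t ∂expWeightedVolume
      ≤ ∫⁻ t in Ioi 0, ENNReal.ofReal (exp (-t)) * f t :=
        lintegral_withDensity_le_lintegral_mul _ (by fun_prop) f
    _ ≤ ∑' n : ℕ, ∫⁻ t in Ioc (n : ℝ) (n + 1), ENNReal.ofReal (exp (-t)) * f t := by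
        rw [← hcover]; exact lintegral_iUnion_le _ _
    _ ≤ ∑' n : ℕ, ENNReal.ofReal M * ENNReal.ofReal ((n + 1) * exp (-n)) :=
        ENNReal.tsum_le_tsum hpiece
    _ = ENNReal.ofReal (M * ∑' n : ℕ, ((n : ℝ) + 1) * exp (-n)) := by
        rw [ENNReal.tsum_mul_left, ← ENNReal.ofReal_tsum_of_nonneg (fun n => by positivity) hsum,
          ENNReal.ofReal_mul' (tsum_nonneg fun n => by positivity)]

variable {E : Type*} [NormedAddCommGroup E]

theorem memLp_indicator_exp_smul [NormedSpace ℝ E] {p : ℝ≥0∞} {g : ℝ → E} {T : ℝ}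
    (hg : MemLp g p (volume.restrict (Ioc 0 T))) :
    MemLp ((Ioc 0 T).indicator fun t => exp t • g t) p expWeightedVolume := by
  rw [memLp_indicator_iff_restrict measurableSet_Ioc]
  refine MemLp.mono_measure (restrict_Ioc_le T) ?_
  have hexp : MemLp (fun t => exp t) ∞ (volume.restrict (Ioc 0 T)) :=
    memLp_top_of_bound continuous_exp.aestronglyMeasurable (exp T)
      (ae_restrict_of_forall_mem measurableSet_Ioc fun t ht => by
        rw [norm_of_nonneg (exp_pos t).le]; exact exp_le_exp.2 ht.2)
  exact hg.smul hexp

theorem integral_inner_indicator_exp_smul [InnerProductSpace ℝ E] (u g : ℝ → E) (T : ℝ) :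
    ∫ t, ⟪u t, (Ioc 0 T).indicator (fun t => exp t • g t) t⟫_ℝ ∂expWeightedVolume =
      ∫ t in Ioc 0 T, ⟪u t, g t⟫_ℝ := by
  have hind : ∀ t, ⟪u t, (Ioc 0 T).indicator (fun t => exp t • g t) t⟫_ℝ =
      (Ioc 0 T).indicator (fun t => ⟪u t, exp t • g t⟫_ℝ) t := fun t => by
    by_cases ht : t ∈ Ioc 0 T <;> simp [ht]
  simp_rw [hind]
  rw [integral_indicator measurableSet_Ioc, restrict_Ioc,
    integral_withDensity_eq_integral_toReal_smul (by fun_prop)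
      (Eventually.of_forall fun _ => ENNReal.ofReal_lt_top)]
  congr 1 with t
  rw [ENNReal.toReal_ofReal (exp_pos _).le, real_inner_smul_right, smul_eq_mul, ← mul_assoc,
    ← exp_add, neg_add_cancel, exp_zero, one_mul]

theorem tendsto_setIntegral_inner [InnerProductSpace ℝ E] {u : ℕ → ℝ → E} {u₀ : ℝ → E}
    (hu : ∀ n, MemLp (u n) 2 expWeightedVolume) (hu₀ : MemLp u₀ 2 expWeightedVolume)
    (h : ∀ G, Tendsto (fun n => ⟪(hu n).toLp (u n), G⟫_ℝ) atTop (𝓝 ⟪hu₀.toLp u₀, G⟫_ℝ))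
    {T : ℝ} {g : ℝ → E} (hg : MemLp g 2 (volume.restrict (Ioc 0 T))) :
    Tendsto (fun n => ∫ t in Ioc 0 T, ⟪u n t, g t⟫_ℝ) atTop
      (𝓝 (∫ t in Ioc 0 T, ⟪u₀ t, g t⟫_ℝ)) := by
  have hG := memLp_indicator_exp_smul hg
  simpa only [MemLp.inner_toLp_toLp, integral_inner_indicator_exp_smul] using h (hG.toLp _)

end expWeightedVolume

theorem MeasureTheory.MemLp.restrict_Ioc_of_expWeightedVolume {E : Type*}
    [NormedAddCommGroup E] {p : ℝ≥0∞} {f : ℝ → E} (hf : MemLp f p expWeightedVolume) (T : ℝ) :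
    MemLp f p (volume.restrict (Ioc 0 T)) :=
  (hf.restrict _).of_measure_le_smul ENNReal.ofReal_ne_top
    (expWeightedVolume.volume_restrict_Ioc_le T)

theorem timeAveraged_L2_ball_weak_sequential_compactness_general
    (d : ℕ) (M : ℝ)
    (w : ℕ → ℝ → EuclideanSpace ℝ (Fin d))
    (hmeas : ∀ n, Measurable (w n))
    (hbd : ∀ n : ℕ, ∀ T : ℝ, 0 < T →
      (∫⁻ t in Set.Ioc 0 T, ENNReal.ofReal (‖w n t‖ ^ 2)) / ENNReal.ofReal T
        ≤ ENNReal.ofReal M) :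
    ∃ wlim : ℝ → EuclideanSpace ℝ (Fin d), Measurable wlim ∧
      (∀ T : ℝ, 0 < T →
        (∫⁻ t in Set.Ioc 0 T, ENNReal.ofReal (‖wlim t‖ ^ 2)) / ENNReal.ofReal T
          ≤ ENNReal.ofReal M) ∧
      ∃ φ : ℕ → ℕ, StrictMono φ ∧
        ∀ T : ℝ, 0 < T → ∀ g : ℝ → EuclideanSpace ℝ (Fin d), Measurable g →
          (∫⁻ t in Set.Ioc 0 T, ENNReal.ofReal (‖g t‖ ^ 2)) < ⊤ →
          Tendsto (fun k : ℕ => ∫ t in Set.Ioc 0 T, (inner ℝ (w (φ k) t) (g t) : ℝ))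
            atTop (nhds (∫ t in Set.Ioc 0 T, (inner ℝ (wlim t) (g t) : ℝ))) := by
  have hw : ∀ n T, 0 < T →
      ∫⁻ t in Ioc 0 T, ENNReal.ofReal (‖w n t‖ ^ 2) ≤ ENNReal.ofReal (M * T) :=
    fun n T hT => (ENNReal.div_ofReal_le_ofReal_iff hT).1 (hbd n T hT)
  obtain ⟨C, hC⟩ := expWeightedVolume.exists_lintegral_le M
  have hmem : ∀ n, MemLp (w n) 2 expWeightedVolume := fun n =>
    (memLp_two_iff_lintegral_ofReal_sq_lt_top (hmeas n).aestronglyMeasurable).2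
      ((hC _ (hw n)).trans_lt ENNReal.ofReal_lt_top)
  have : Fact ((2 : ℝ≥0∞) ≠ ∞) := ⟨ENNReal.ofNat_ne_top⟩
  obtain ⟨v, φ, hφ, hv⟩ := exists_subseq_tendsto_inner (𝕜 := ℝ)
    fun n => ((hmem n).norm_toLp_le_sqrt_iff C).2 (hC _ (hw n))
  obtain ⟨wlim, hwlim, hwlim_mem, rfl⟩ := Lp.exists_stronglyMeasurable_toLp_eq v
  have hconv : ∀ T : ℝ, 0 < T → ∀ g : ℝ → EuclideanSpace ℝ (Fin d), Measurable g →
      (∫⁻ t in Ioc 0 T, ENNReal.ofReal (‖g t‖ ^ 2)) < ⊤ →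
      Tendsto (fun k : ℕ => ∫ t in Ioc 0 T, ⟪w (φ k) t, g t⟫_ℝ)
        atTop (𝓝 (∫ t in Ioc 0 T, ⟪wlim t, g t⟫_ℝ)) := fun T _ g hg hg_fin =>
    expWeightedVolume.tendsto_setIntegral_inner (fun k => hmem (φ k)) hwlim_mem hv
      ((memLp_two_iff_lintegral_ofReal_sq_lt_top hg.aestronglyMeasurable).2 hg_fin)
  refine ⟨wlim, hwlim.measurable, fun T hT => (ENNReal.div_ofReal_le_ofReal_iff hT).2 ?_,
    φ, hφ, hconv⟩
  have hwlim_T := hwlim_mem.restrict_Ioc_of_expWeightedVolume T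
  exact lintegral_ofReal_sq_le_of_tendsto_integral_inner
    (fun _ => (hmeas _).aestronglyMeasurable) (fun _ => hw _ T hT) hwlim_T
    (hconv T hT wlim hwlim.measurable
      ((memLp_two_iff_lintegral_ofReal_sq_lt_top hwlim_T.1).1 hwlim_T))

/-- Sequential compactness of the set of `ℝ^d`-valued functions whose time-averaged `L²`
norm is bounded by `M`, in the topology of weak `L²([0,T])` convergence for every `T > 0`. -/
theorem timeAveraged_L2_ball_weak_sequential_compactness
    (d : ℕ) (M : ℝ) (hM : 0 < M)
    (w : ℕ → ℝ → EuclideanSpace ℝ (Fin d))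
    (hmeas : ∀ n, Measurable (w n))
    (hbd : ∀ n : ℕ, ∀ T : ℝ, 0 < T →
      (∫⁻ t in Set.Ioc 0 T, ENNReal.ofReal (‖w n t‖ ^ 2)) / ENNReal.ofReal T
        ≤ ENNReal.ofReal M) :
    ∃ wlim : ℝ → EuclideanSpace ℝ (Fin d), Measurable wlim ∧
      (∀ T : ℝ, 0 < T →
        (∫⁻ t in Set.Ioc 0 T, ENNReal.ofReal (‖wlim t‖ ^ 2)) / ENNReal.ofReal T
          ≤ ENNReal.ofReal M) ∧
      ∃ φ : ℕ → ℕ, StrictMono φ ∧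
        ∀ T : ℝ, 0 < T → ∀ g : ℝ → EuclideanSpace ℝ (Fin d), Measurable g →
          (∫⁻ t in Set.Ioc 0 T, ENNReal.ofReal (‖g t‖ ^ 2)) < ⊤ →
          Tendsto (fun k : ℕ => ∫ t in Set.Ioc 0 T, (inner ℝ (w (φ k) t) (g t) : ℝ))
            atTop (nhds (∫ t in Set.Ioc 0 T, (inner ℝ (wlim t) (g t) : ℝ))) :=
  timeAveraged_L2_ball_weak_sequential_compactness_general d M w hmeas hbd
end
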